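/- Let λ > 0, 0 < φ < π, and m, n ∈ ℕ. Then for all x ∈ ℂ, binom(n+m, n) · P_{m+n}^{(λ)}(x; φ) = Σ_{k=0}^{min(n,m)} ((−i)^k e^{−ikφ} / k!) · (2 sin φ)^k · (λ+ix)_k · P_{n−k}^{(λ+k/2)}(x − ik/2; φ) · P_{m−k}^{(λ+(n+k)/2)}(x + i(n−k)/2; φ), where i is the imaginary unit. -/

import Mathlib

open Finset Complex

/-- Pochhammer symbol `(a)_j = a(a+1)⋯(a+j-1)` for complex `a`. -/
noncomputable def pochC (a : ℂ) (j : ℕ) : ℂ := ∏ i ∈ Finset.range j, (a + i)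

/-- Meixner–Pollaczek polynomial `P_n^{(λ)}(x; φ)` for complex `x`. -/
noncomputable def mpP (n : ℕ) (lam φ : ℝ) (x : ℂ) : ℂ :=
  pochC (2 * lam) n / (n.factorial : ℂ) * Complex.exp ((n : ℂ) * φ * Complex.I) *
    ∑ k ∈ Finset.range (n + 1),
      pochC (-(n : ℂ)) k * pochC ((lam : ℂ) + Complex.I * x) k /
          (pochC (2 * lam) k * (k.factorial : ℂ)) *
        (1 - Complex.exp (-2 * φ * Complex.I)) ^ k

/-!
Put `a = λ + i x`, `b = λ - i x`, `p = e^{-2iφ}` and `G_{a,b} = (1 - p t)^{-a} (1 - t)^{-b}`.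
Chu–Vandermonde turns the terminating ₂F₁ into `P_N^{(λ)}(x; φ) = e^{iNφ} [t^N] G_{a,b}`, and the
shifted polynomials on the right are, up to phases, `[t^N] G_{a+k,b}` and `[t^N] G_{a+k,b+n}`.
On the left, `binom(n+m, n) [t^{n+m}] G_{a,b} = [t^m] Dⁿ G_{a,b} / n!`. By Leibniz, `Dⁿ G_{a,b}` is
a combination of the `G_{a+i,b+j}` with `i + j = n`, and `G_{a+i,b+j} = G_{a,b+n} Wⁱ` with
`W = (1 - t) / (1 - p t)`; so `Dⁿ G_{a,b} / n! = G_{a,b+n} S_n(p W)`, where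
`S_n(q) = [s^n] (1 - q s)^{-a} (1 - s)^{-b}`. Expanding the polynomial `S_n` around `q = p`, in
powers of `p W - p = p (p - 1) t / (1 - p t)`, produces the sum over `k`, and
`-i e^{-iφ} · 2 sin φ = p - 1` turns its coefficients into the stated ones.
-/

theorem Derivation.iterate_leibniz {R A : Type*} [CommSemiring R] [CommSemiring A] [Algebra R A]
    (D : Derivation R A A) (n : ℕ) (a b : A) :
    D^[n] (a * b) = ∑ ij ∈ antidiagonal n, n.choose ij.1 • (D^[ij.1] a * D^[ij.2] b) := by
  induction n with
  | zero => simp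
  | succ n ih =>
    rw [sum_antidiagonal_choose_succ_nsmul (fun i j => D^[i] a * D^[j] b) n]
    simp only [Function.iterate_succ_apply', ih, map_sum, map_nsmul, Derivation.leibniz,
      smul_eq_mul, nsmul_add, sum_add_distrib]
    congr 1
    refine sum_congr rfl fun ⟨i, j⟩ hij => ?_
    rw [Nat.choose_symm_of_eq_add (mem_antidiagonal.1 hij).symm, mul_comm]

theorem Finset.sum_antidiagonal_antidiagonal_fst {M : Type*} [AddCommMonoid M]
    (f : ℕ → ℕ → ℕ → M) (N : ℕ) :
    ∑ x ∈ antidiagonal N, ∑ y ∈ antidiagonal x.1, f y.1 y.2 x.2 =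
      ∑ x ∈ antidiagonal N, ∑ y ∈ antidiagonal x.2, f x.1 y.1 y.2 := by
  simp only [sum_sigma']
  apply sum_nbij' (fun ⟨⟨_, j⟩, ⟨k, l⟩⟩ ↦ ⟨(k, l + j), (l, j)⟩)
    (fun ⟨⟨i, _⟩, ⟨k, l⟩⟩ ↦ ⟨(i + k, l), (i, k)⟩) <;> aesop (add simp [add_assoc])

lemma pochC_add (a : ℂ) (i j : ℕ) : pochC a (i + j) = pochC a i * pochC (a + i) j := by
  simp only [pochC, prod_range_add, Nat.cast_add, add_assoc]

lemma pochC_succ (a : ℂ) (n : ℕ) : pochC a (n + 1) = pochC a n * (a + n) := by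
  simp [pochC, prod_range_succ]

lemma pochC_succ' (a : ℂ) (n : ℕ) : pochC a (n + 1) = a * pochC (a + 1) n := by
  rw [add_comm, pochC_add]
  simp [pochC]

lemma pochC_eq_eval_ascPochhammer (a : ℂ) (n : ℕ) : pochC a n = (ascPochhammer ℂ n).eval a := by
  induction n with
  | zero => simp [pochC]
  | succ n ih => rw [ascPochhammer_succ_eval, ← ih, pochC, prod_range_succ, pochC]

lemma pochC_div_factorial (a : ℂ) (n : ℕ) : pochC a n / n.factorial = Ring.multichoose a n := by
  rw [div_eq_iff (by exact_mod_cast n.factorial_ne_zero), pochC_eq_eval_ascPochhammer,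
    ← Polynomial.ascPochhammer_smeval_eq_eval, ← Ring.factorial_nsmul_multichoose_eq_ascPochhammer,
    nsmul_eq_mul, mul_comm]

lemma pochC_div_factorial_mul_choose (a : ℂ) (k l : ℕ) :
    pochC a (k + l) / (k + l).factorial * (k + l).choose k =
      pochC a k / k.factorial * (pochC (a + k) l / l.factorial) := by
  have h := Nat.add_choose_mul_factorial_mul_factorial k l
  have hk : (k.factorial : ℂ) ≠ 0 := by exact_mod_cast k.factorial_ne_zero
  have hl : (l.factorial : ℂ) ≠ 0 := by exact_mod_cast l.factorial_ne_zero
  have hc : ((k + l).choose l : ℂ) ≠ 0 := by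
    exact_mod_cast (Nat.choose_pos (Nat.le_add_left l k)).ne'
  rw [pochC_add, Nat.choose_symm_add, ← h]
  push_cast
  field_simp

lemma pochC_ne_zero {c : ℂ} (hc : 0 < c.re) (n : ℕ) : pochC c n ≠ 0 :=
  prod_ne_zero_iff.2 fun i _ h => by
    have := congrArg re h
    simp only [add_re, natCast_re, zero_re] at this
    linarith [(Nat.cast_nonneg i : (0 : ℝ) ≤ i)]

lemma pochC_neg_natCast (n k : ℕ) : pochC (-n) k = (-1) ^ k * n.descFactorial k := by
  rw [pochC_eq_eval_ascPochhammer, ascPochhammer_eval_neg_eq_descPochhammer,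
    descPochhammer_eval_eq_descFactorial]

section pochConv

variable {A : Type*} [CommRing A] [Algebra ℂ A]

/-- The `N`-th coefficient of `(1 - q X) ^ (-a) * (1 - X) ^ (-b)`. -/
noncomputable def pochConv (N : ℕ) (a b : ℂ) (q : A) : A :=
  ∑ ij ∈ antidiagonal N,
    (pochC a ij.1 / ij.1.factorial * (pochC b ij.2 / ij.2.factorial)) • q ^ ij.1

theorem pochConv_add (N : ℕ) (a b : ℂ) (q δ : A) :
    pochConv N a b (q + δ) = ∑ kl ∈ antidiagonal N,
      (pochC a kl.1 / kl.1.factorial) • δ ^ kl.1 * pochConv kl.2 (a + kl.1) b q := by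
  calc pochConv N a b (q + δ)
      = ∑ x ∈ antidiagonal N, ∑ y ∈ antidiagonal x.1,
          (pochC a (y.1 + y.2) / (y.1 + y.2).factorial * (y.1 + y.2).choose y.1 *
            (pochC b x.2 / x.2.factorial)) • (δ ^ y.1 * q ^ y.2) := by
        refine sum_congr rfl fun x _ => ?_
        rw [add_comm q, (Commute.all δ q).add_pow', smul_sum]
        refine sum_congr rfl fun y hy => ?_
        rw [mem_antidiagonal.1 hy, ← Nat.cast_smul_eq_nsmul ℂ, smul_smul]
        ring_nf
    _ = ∑ x ∈ antidiagonal N, ∑ y ∈ antidiagonal x.2,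
          (pochC a (x.1 + y.1) / (x.1 + y.1).factorial * (x.1 + y.1).choose x.1 *
            (pochC b y.2 / y.2.factorial)) • (δ ^ x.1 * q ^ y.1) :=
        sum_antidiagonal_antidiagonal_fst (fun k l j => (pochC a (k + l) / (k + l).factorial *
          (k + l).choose k * (pochC b j / j.factorial)) • (δ ^ k * q ^ l)) N
    _ = _ := by
        refine sum_congr rfl fun x _ => ?_
        rw [pochConv, mul_sum]
        refine sum_congr rfl fun y _ => ?_
        rw [pochC_div_factorial_mul_choose, smul_mul_smul_comm, mul_assoc]

lemma pochConv_algebraMap (N : ℕ) (a b q : ℂ) :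
    pochConv N a b (algebraMap ℂ A q) = algebraMap ℂ A (pochConv N a b q) := by
  simp [pochConv, map_sum, Algebra.smul_def, map_mul, map_pow]

lemma factorial_smul_pochConv (n : ℕ) (a b : ℂ) (q : A) :
    (n.factorial : ℂ) • pochConv n a b q =
      ∑ ij ∈ antidiagonal n, (n.choose ij.1 * pochC a ij.1 * pochC b ij.2) • q ^ ij.1 := by
  rw [pochConv, smul_sum]
  refine sum_congr rfl fun ⟨i, j⟩ hij => ?_
  rw [← (mem_antidiagonal.1 hij), smul_smul, ← Nat.add_choose_mul_factorial_mul_factorial i j,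
    Nat.choose_symm_add]
  have hi : (i.factorial : ℂ) ≠ 0 := by exact_mod_cast i.factorial_ne_zero
  have hj : (j.factorial : ℂ) ≠ 0 := by exact_mod_cast j.factorial_ne_zero
  congr 1
  push_cast
  field_simp

end pochConv

section GeneratingFunctions

open PowerSeries

lemma rescale_smul {R : Type*} [CommSemiring R] (p c : R) (f : R⟦X⟧) :
    rescale p (c • f) = c • rescale p f := by
  ext n
  simp only [coeff_rescale, coeff_smul, smul_eq_mul]
  ring

lemma derivative_rescale {R : Type*} [CommSemiring R] (p : R) (f : R⟦X⟧) :
    d⁄dX R (rescale p f) = p • rescale p (d⁄dX R f) := by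
  ext n
  simp only [coeff_derivative, coeff_rescale, coeff_smul, smul_eq_mul, pow_succ]
  ring

lemma iterate_derivative_rescale {R : Type*} [CommSemiring R] (p : R) (f : R⟦X⟧) (k : ℕ) :
    (d⁄dX R)^[k] (rescale p f) = p ^ k • rescale p ((d⁄dX R)^[k] f) := by
  induction k with
  | zero => simp
  | succ k ih =>
    rw [Function.iterate_succ_apply', ih, Derivation.map_smul, derivative_rescale, smul_smul,
      Function.iterate_succ_apply', pow_succ]

/-- The binomial series of `(1 - X) ^ (-a)`. -/
noncomputable def pochSeries (a : ℂ) : ℂ⟦X⟧ := mk fun n => pochC a n / n.factorial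

lemma pochSeries_eq_rescale_binomialSeries (a : ℂ) :
    pochSeries a = rescale (-1) (binomialSeries ℂ (-a)) := by
  ext n
  rw [pochSeries, coeff_mk, coeff_rescale, binomialSeries_coeff, Ring.choose_neg, Units.smul_def,
    ← Ring.multichoose_eq, pochC_div_factorial]
  simp [← mul_assoc, ← mul_pow]

lemma pochSeries_add (a b : ℂ) : pochSeries (a + b) = pochSeries a * pochSeries b := by
  simp only [pochSeries_eq_rescale_binomialSeries, neg_add, binomialSeries_add, map_mul]

lemma pochSeries_zero : pochSeries 0 = 1 := by
  simp [pochSeries_eq_rescale_binomialSeries]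

lemma pochSeries_neg_one : pochSeries (-1) = 1 - X := by
  rw [pochSeries_eq_rescale_binomialSeries, neg_neg, ← Nat.cast_one, binomialSeries_nat, pow_one,
    map_add, map_one, rescale_X, sub_eq_add_neg]
  simp

lemma pochSeries_add_natCast (a : ℂ) (k : ℕ) :
    pochSeries (a + k) = pochSeries a * pochSeries 1 ^ k := by
  induction k with
  | zero => simp
  | succ k ih => rw [Nat.cast_succ, ← add_assoc, pochSeries_add, ih, pow_succ, mul_assoc]

lemma pochSeries_one_mul_one_sub_X : pochSeries 1 * (1 - X) = 1 := by
  rw [← pochSeries_neg_one, ← pochSeries_add, add_neg_cancel, pochSeries_zero]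

lemma derivative_pochSeries (a : ℂ) : d⁄dX ℂ (pochSeries a) = a • pochSeries (a + 1) := by
  ext n
  simp only [coeff_derivative, pochSeries, coeff_mk, coeff_smul, smul_eq_mul, pochC_succ',
    Nat.factorial_succ]
  have : (n.factorial : ℂ) ≠ 0 := by exact_mod_cast n.factorial_ne_zero
  push_cast
  field_simp

lemma iterate_derivative_pochSeries (a : ℂ) (k : ℕ) :
    (d⁄dX ℂ)^[k] (pochSeries a) = pochC a k • pochSeries (a + k) := by
  induction k with
  | zero => simp [pochC]
  | succ k ih =>
    rw [Function.iterate_succ_apply', ih, Derivation.map_smul, derivative_pochSeries, smul_smul,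
      pochC_succ]
    push_cast
    ring_nf

noncomputable def pochConvSeries (p a b : ℂ) : ℂ⟦X⟧ := rescale p (pochSeries a) * pochSeries b

lemma coeff_pochConvSeries (p a b : ℂ) (N : ℕ) :
    coeff N (pochConvSeries p a b) = pochConv N a b p := by
  simp only [pochConvSeries, pochConv, coeff_mul, pochSeries, coeff_rescale, coeff_mk,
    smul_eq_mul]
  exact sum_congr rfl fun _ _ => by ring

lemma pochConv_one (N : ℕ) (a b : ℂ) :
    pochConv N a b (1 : ℂ) = pochC (a + b) N / N.factorial := by
  rw [← coeff_pochConvSeries, pochConvSeries, rescale_one, RingHom.id_apply, ← pochSeries_add,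
    pochSeries, coeff_mk]

variable (p : ℂ)

lemma pochConvSeries_add_natCast_left (a b : ℂ) (k : ℕ) :
    pochConvSeries p (a + k) b = pochConvSeries p a b * rescale p (pochSeries 1) ^ k := by
  rw [pochConvSeries, pochSeries_add_natCast, map_mul, map_pow, pochConvSeries]
  ring

lemma pochConvSeries_add_natCast (a b : ℂ) (i j : ℕ) :
    pochConvSeries p (a + i) (b + j) = pochConvSeries p a (b + (i + j)) *
      (1 + C (p - 1) * X * rescale p (pochSeries 1)) ^ i := by
  have hR :
      rescale p (pochSeries 1) * (1 - X) = 1 + C (p - 1) * X * rescale p (pochSeries 1) := by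
    have h := congrArg (rescale p) pochSeries_one_mul_one_sub_X
    rw [map_mul, map_sub, map_one, rescale_X] at h
    rw [map_sub, map_one]
    linear_combination h
  have hb : pochSeries (b + j) = pochSeries (b + (i + j)) * (1 - X) ^ i := by
    rw [add_comm (i : ℂ), ← add_assoc, pochSeries_add_natCast (b + j), mul_assoc, ← mul_pow,
      pochSeries_one_mul_one_sub_X, one_pow, mul_one]
  rw [pochConvSeries_add_natCast_left, pochConvSeries, pochConvSeries, hb, ← hR, mul_pow]
  ring

lemma iterate_derivative_pochConvSeries (a b : ℂ) (n : ℕ) :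
    (d⁄dX ℂ)^[n] (pochConvSeries p a b) = ∑ ij ∈ antidiagonal n,
      (n.choose ij.1 * p ^ ij.1 * pochC a ij.1 * pochC b ij.2) •
        pochConvSeries p (a + ij.1) (b + ij.2) := by
  rw [pochConvSeries, Derivation.iterate_leibniz]
  refine sum_congr rfl fun ij _ => ?_
  rw [iterate_derivative_rescale, iterate_derivative_pochSeries, iterate_derivative_pochSeries,
    rescale_smul, smul_smul, smul_mul_smul_comm, ← Nat.cast_smul_eq_nsmul ℂ, smul_smul,
    pochConvSeries]
  ring_nf

theorem factorial_inv_smul_iterate_derivative_pochConvSeries (a b : ℂ) (n : ℕ) :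
    (n.factorial : ℂ)⁻¹ • (d⁄dX ℂ)^[n] (pochConvSeries p a b) = ∑ kl ∈ antidiagonal n,
      (pochC a kl.1 / kl.1.factorial * (p ^ 2 - p) ^ kl.1 * pochConv kl.2 (a + kl.1) b p) •
        (X ^ kl.1 * pochConvSeries p (a + kl.1) (b + n)) := by
  set R := rescale p (pochSeries 1)
  have hW : C p * (1 + C (p - 1) * X * R) = algebraMap ℂ ℂ⟦X⟧ p + C (p ^ 2 - p) * X * R := by
    rw [← C_eq_algebraMap, map_sub, map_sub, map_pow, map_one]
    ring
  calc (n.factorial : ℂ)⁻¹ • (d⁄dX ℂ)^[n] (pochConvSeries p a b)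
      = (n.factorial : ℂ)⁻¹ • ∑ ij ∈ antidiagonal n,
          (n.choose ij.1 * pochC a ij.1 * pochC b ij.2) •
            (pochConvSeries p a (b + n) * (C p * (1 + C (p - 1) * X * R)) ^ ij.1) := by
        rw [iterate_derivative_pochConvSeries]
        congr 1
        refine sum_congr rfl fun ij hij => ?_
        rw [pochConvSeries_add_natCast, ← Nat.cast_add, mem_antidiagonal.1 hij, mul_pow]
        simp only [R, smul_eq_C_mul, map_mul, map_pow, map_natCast]
        ring
    _ = pochConvSeries p a (b + n) * pochConv n a b (C p * (1 + C (p - 1) * X * R)) := by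
        rw [← inv_smul_smul₀ (by exact_mod_cast n.factorial_ne_zero : (n.factorial : ℂ) ≠ 0)
          (pochConv n a b _), factorial_smul_pochConv, mul_smul_comm, mul_sum]
        simp only [mul_smul_comm]
    _ = _ := by
        rw [hW, pochConv_add, mul_sum]
        refine sum_congr rfl fun kl _ => ?_
        rw [pochConv_algebraMap, pochConvSeries_add_natCast_left, ← C_eq_algebraMap]
        simp only [smul_eq_C_mul, map_mul, map_pow]
        ring

theorem choose_mul_pochConv_add (a b : ℂ) (n m : ℕ) :
    (n + m).choose n * pochConv (n + m) a b p = ∑ k ∈ range (min n m + 1),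
      pochC a k / k.factorial * (p ^ 2 - p) ^ k * pochConv (n - k) (a + k) b p *
        pochConv (m - k) (a + k) (b + n) p := by
  have h := congrArg (coeff m) (factorial_inv_smul_iterate_derivative_pochConvSeries p a b n)
  simp only [coeff_smul, coeff_iterate_derivative, coeff_pochConvSeries, map_sum, coeff_X_pow_mul',
    smul_eq_mul, mul_ite, mul_zero, Nat.ascFactorial_eq_factorial_mul_choose,
    Nat.sum_antidiagonal_eq_sum_range_succ_mk, ← sum_filter] at h
  have hrange : (range (n + 1)).filter (· ≤ m) = range (min n m + 1) := by
    ext k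
    simp only [mem_filter, mem_range]
    omega
  rwa [hrange, add_comm m, Nat.cast_mul, ← mul_assoc, inv_mul_cancel_left₀
    (by exact_mod_cast n.factorial_ne_zero)] at h

end GeneratingFunctions

lemma pochConv_eq_hypergeometric (n : ℕ) (a b q : ℂ) (h : pochC (a + b) n ≠ 0) :
    pochConv n a b q = pochC (a + b) n / n.factorial *
      ∑ k ∈ range (n + 1), pochC (-n) k * pochC a k / (pochC (a + b) k * k.factorial) *
        (1 - q) ^ k := by
  rw [← add_sub_cancel 1 q, pochConv_add, Nat.sum_antidiagonal_eq_sum_range_succ_mk, mul_sum]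
  refine sum_congr rfl fun k hk => ?_
  have hkn : k ≤ n := Nat.lt_succ_iff.1 (mem_range.1 hk)
  have hsplit : pochC (a + b) n = pochC (a + b) k * pochC (a + b + k) (n - k) := by
    rw [← pochC_add, Nat.add_sub_cancel' hkn]
  have hfac : ((n - k).factorial * n.descFactorial k : ℂ) = n.factorial := by
    exact_mod_cast Nat.factorial_mul_descFactorial hkn
  have hk : pochC (a + b) k ≠ 0 := left_ne_zero_of_mul (hsplit ▸ h)
  have h1 : (k.factorial : ℂ) ≠ 0 := by exact_mod_cast k.factorial_ne_zero
  have h2 : ((n - k).factorial : ℂ) ≠ 0 := by exact_mod_cast (n - k).factorial_ne_zero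
  have h3 : (n.descFactorial k : ℂ) ≠ 0 := by
    exact_mod_cast Nat.descFactorial_eq_zero_iff_lt.not.2 (not_lt.2 hkn)
  dsimp only
  rw [pochConv_one, hsplit, pochC_neg_natCast, ← hfac, smul_eq_mul, add_right_comm a,
    show 1 - (1 + (q - 1)) = -(q - 1) by ring, neg_pow (q - 1)]
  field_simp
  rw [← pow_mul, mul_comm k, pow_mul, neg_one_sq, one_pow, mul_one]

lemma mpP_eq_exp_mul_pochConv (n : ℕ) {lam : ℝ} (hlam : 0 < lam) (φ : ℝ) (x : ℂ) :
    mpP n lam φ x =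
      exp (n * φ * I) * pochConv n (lam + I * x) (lam - I * x) (exp (-2 * φ * I)) := by
  have hsum : (lam + I * x) + (lam - I * x) = 2 * lam := by ring
  have hne : pochC (2 * lam) n ≠ 0 := pochC_ne_zero (by simpa using hlam) n
  rw [pochConv_eq_hypergeometric _ _ _ _ (hsum ▸ hne), hsum, mpP]
  ring

lemma neg_I_pow_mul_exp_mul_two_sin_pow (φ : ℝ) (k : ℕ) :
    (-I) ^ k * exp (-(k : ℂ) * φ * I) * (2 * Real.sin φ : ℝ) ^ k = (exp (-2 * φ * I) - 1) ^ k := by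
  rw [show exp (-(k : ℂ) * φ * I) = exp (-φ * I) ^ k by rw [← exp_nat_mul]; ring_nf, ← mul_pow,
    ← mul_pow]
  congr 1
  have h1 : exp (-φ * I) * exp (-φ * I) = exp (-2 * φ * I) := by rw [← exp_add]; ring_nf
  have h2 : exp (φ * I) * exp (-φ * I) = 1 := by rw [← exp_add]; simp
  push_cast
  rw [Complex.sin]
  linear_combination h1 - h2 - exp (-φ * I) * (exp (-φ * I) - exp (φ * I)) * I_mul_I

theorem burchnall_meixner_pollaczek_expansion_general (lam φ : ℝ) (hlam : 0 < lam) (m n : ℕ) (x : ℂ) :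
    (((n + m).choose n : ℕ) : ℂ) * mpP (m + n) lam φ x =
      ∑ k ∈ Finset.range (min n m + 1),
        (-Complex.I) ^ k * Complex.exp (-(k : ℂ) * φ * Complex.I) / (k.factorial : ℂ) *
          (2 * Real.sin φ : ℝ) ^ k * pochC ((lam : ℂ) + Complex.I * x) k *
          mpP (n - k) (lam + k / 2) φ (x - Complex.I * k / 2) *
          mpP (m - k) (lam + (n + k) / 2) φ (x + Complex.I * ((n : ℂ) - k) / 2) := by
  rw [mpP_eq_exp_mul_pochConv _ hlam, add_comm m n, mul_left_comm, choose_mul_pochConv_add, mul_sum]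
  refine sum_congr rfl fun k hk => ?_
  obtain ⟨hkn, hkm⟩ : k ≤ n ∧ k ≤ m := by have := mem_range.1 hk; omega
  have hcoeff : (-I) ^ k * exp (-(k : ℂ) * φ * I) * (2 * Real.sin φ : ℝ) ^ k *
      (exp ((n - k : ℕ) * φ * I) * exp ((m - k : ℕ) * φ * I)) =
        exp ((n + m : ℕ) * φ * I) * (exp (-2 * φ * I) ^ 2 - exp (-2 * φ * I)) ^ k := by
    rw [neg_I_pow_mul_exp_mul_two_sin_pow, ← exp_add, sq, ← mul_sub_one, mul_pow, ← exp_nat_mul,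
      ← mul_assoc, ← exp_add, mul_comm]
    congr 2
    push_cast [Nat.cast_sub hkn, Nat.cast_sub hkm]
    ring
  rw [mpP_eq_exp_mul_pochConv _ (by positivity), mpP_eq_exp_mul_pochConv _ (by positivity)]
  have e₁ : ((lam + k / 2 : ℝ) : ℂ) + I * (x - I * k / 2) = lam + I * x + k := by
    push_cast; linear_combination (-(k : ℂ) / 2) * I_mul_I
  have e₂ : ((lam + k / 2 : ℝ) : ℂ) - I * (x - I * k / 2) = lam - I * x := by
    push_cast; linear_combination ((k : ℂ) / 2) * I_mul_I
  have e₃ : ((lam + (n + k) / 2 : ℝ) : ℂ) + I * (x + I * (n - k) / 2) = lam + I * x + k := by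
    push_cast; linear_combination ((n - k : ℂ) / 2) * I_mul_I
  have e₄ : ((lam + (n + k) / 2 : ℝ) : ℂ) - I * (x + I * (n - k) / 2) = lam - I * x + n := by
    push_cast; linear_combination (-(n - k : ℂ) / 2) * I_mul_I
  rw [e₁, e₂, e₃, e₄]
  set S₁ := pochConv (n - k) (lam + I * x + k) (lam - I * x) (exp (-2 * φ * I))
  set S₂ := pochConv (m - k) (lam + I * x + k) (lam - I * x + n) (exp (-2 * φ * I))
  linear_combination (-(pochC (lam + I * x) k / k.factorial * S₁ * S₂)) * hcoeff

theorem burchnall_meixner_pollaczek_expansion (lam φ : ℝ) (hlam : 0 < lam) (hφ0 : 0 < φ)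
    (hφπ : φ < Real.pi) (m n : ℕ) (x : ℂ) :
    (((n + m).choose n : ℕ) : ℂ) * mpP (m + n) lam φ x =
      ∑ k ∈ Finset.range (min n m + 1),
        (-Complex.I) ^ k * Complex.exp (-(k : ℂ) * φ * Complex.I) / (k.factorial : ℂ) *
          (2 * Real.sin φ : ℝ) ^ k * pochC ((lam : ℂ) + Complex.I * x) k *
          mpP (n - k) (lam + k / 2) φ (x - Complex.I * k / 2) *
          mpP (m - k) (lam + (n + k) / 2) φ (x + Complex.I * ((n : ℂ) - k) / 2) :=
  burchnall_meixner_pollaczek_expansion_general lam φ hlam m n x
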